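/- arXiv:1302.0072 — 2 statements merged into one kernel-verified Lean document; each statement's English description precedes it below -/
import Mathlib

section
/- If two m × m̄ matrices have identical 1D row-name representations (row i of both matrices is periodic with a conjugate of the same primitive Lyndon word u_i for each i) and their 2D Lyndon word representatives are equal with equal alignment columns, then the matrices are equal. Conversely, equal matrices have equal 2D Lyndon word representatives. -/
/-- `w^k` : concatenation of `k` copies of `w`. -/
def listPow {α : Type*} (w : List α) (k : ℕ) : List α := (List.replicate k w).flatten

/-- A string is primitive if it is not a proper power `w^j` with `j > 1`. -/
def IsPrimitive {α : Type*} (S : List α) : Prop :=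
  ∀ (w : List α) (j : ℕ), 1 < j → S ≠ listPow w j

/-- A word is a Lyndon word if it is nonempty, primitive, and lexicographically
minimal among its conjugates. -/
def IsLyndon {α : Type*} [LinearOrder α] (u : List α) : Prop :=
  u ≠ [] ∧ IsPrimitive u ∧ ∀ x y : List α, u = x ++ y → y ≠ [] → x ≠ [] → u ≤ y ++ x

/-- The matrix over `Fin m × Fin mb` whose row `i` is the factor of `(u i)^∞`
starting at offset `a i`. -/
noncomputable def rowMatrix {α : Type*} {m mb : ℕ} (u : Fin m → List α)
    (hu : ∀ i, u i ≠ []) (a : Fin m → ℕ) : Fin m → Fin mb → α :=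
  fun i j => (u i).get ⟨(a i + j) % (u i).length, Nat.mod_lt _ (List.length_pos_iff.mpr (hu i))⟩

/-!
The first `|u i|` entries of row `i` spell the rotation of `u i` by `a i`, so the two matrices
agree iff `(u i).rotate (a i) = (u i).rotate (a' i)` for every `i`. A primitive word `u` is
fixed by a rotation `s` only if `|u| ∣ s`: otherwise `u = x ++ y = y ++ x` with `x, y` nonempty,
and commuting words are powers of a common word, which makes `u` a proper power.
-/

open List

section listPow

variable {α : Type*}

theorem listPow_add (w : List α) (k l : ℕ) : listPow w (k + l) = listPow w k ++ listPow w l := by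
  simp only [listPow, replicate_add, flatten_append]

theorem listPow_zero (w : List α) : listPow w 0 = [] := rfl

theorem listPow_one (w : List α) : listPow w 1 = w := by
  simp [listPow]

theorem exists_eq_listPow_of_append_comm {x y : List α} (h : x ++ y = y ++ x) :
    ∃ z k l, x = listPow z k ∧ y = listPow z l := by
  induction hn : x.length + y.length using Nat.strong_induction_on generalizing x y with
  | _ n ih =>
  wlog hle : x.length ≤ y.length generalizing x y
  · obtain ⟨z, k, l, hx, hy⟩ := this h.symm (by omega) (by omega)
    exact ⟨z, l, k, hy, hx⟩
  rcases eq_or_ne x [] with rfl | hx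
  · exact ⟨y, 0, 1, listPow_zero y, (listPow_one y).symm⟩
  obtain ⟨t, rfl⟩ : x <+: y :=
    prefix_of_prefix_length_le (h ▸ prefix_append x y) (prefix_append y x) hle
  have hcomm : x ++ t = t ++ x := by simpa using h
  have hlen : x.length + t.length < n := by
    have := length_pos_iff.mpr hx
    simp only [length_append] at hn
    omega
  obtain ⟨z, k, l, rfl, rfl⟩ := ih _ hlen hcomm rfl
  exact ⟨z, k, k + l, rfl, (listPow_add z k l).symm⟩

end listPow

namespace IsPrimitive

variable {α : Type*} {u : List α}

theorem ne_nil (hu : IsPrimitive u) : u ≠ [] := by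
  rintro rfl
  exact hu [] 2 one_lt_two (by simp [listPow])

theorem mod_length_eq_zero_of_rotate_eq_self (hu : IsPrimitive u) {n : ℕ} (h : u.rotate n = u) :
    n % u.length = 0 := by
  set s := n % u.length
  have hs : s < u.length := Nat.mod_lt _ (length_pos_iff.mpr hu.ne_nil)
  by_contra hs0
  have hcomm : u.take s ++ u.drop s = u.drop s ++ u.take s := by
    rw [take_append_drop, ← rotate_eq_drop_append_take hs.le, rotate_mod, h]
  obtain ⟨z, k, l, hk, hl⟩ := exists_eq_listPow_of_append_comm hcomm
  have hk1 : k ≠ 0 := by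
    rintro rfl
    simp [listPow_zero, take_eq_nil_iff, hs0, hu.ne_nil] at hk
  have hl1 : l ≠ 0 := by
    rintro rfl
    simp only [listPow_zero, drop_eq_nil_iff] at hl
    omega
  exact hu z (k + l) (by omega) (by rw [listPow_add, ← hk, ← hl, take_append_drop])

theorem rotate_eq_rotate_iff (hu : IsPrimitive u) {m n : ℕ} :
    u.rotate m = u.rotate n ↔ m % u.length = n % u.length := by
  refine ⟨fun h => ?_, fun h => by rw [← rotate_mod, h, rotate_mod]⟩
  have hL : 0 < u.length := length_pos_iff.mpr hu.ne_nil
  set c := (u.length - 1) * n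
  have hnc : n + c = u.length * n := by
    obtain ⟨L, hsucc⟩ : ∃ L, u.length = L + 1 := ⟨_, (Nat.succ_pred_eq_of_pos hL).symm⟩
    simp only [c, hsucc, Nat.add_sub_cancel]
    ring
  have hmc : u.rotate (m + c) = u := by
    rw [← rotate_rotate, h, rotate_rotate, hnc, rotate_length_mul]
  refine Nat.ModEq.add_right_cancel' c ?_
  rw [Nat.ModEq, hu.mod_length_eq_zero_of_rotate_eq_self hmc, hnc, Nat.mul_mod_right]

end IsPrimitive

section rowMatrix

variable {α : Type*} {m mb : ℕ} (u : Fin m → List α) (hu : ∀ i, u i ≠ [])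

theorem rowMatrix_apply (a : Fin m → ℕ) (i : Fin m) (j : Fin mb) :
    rowMatrix u hu a i j =
      ((u i).rotate (a i))[j % (u i).length]'(by
        simpa using Nat.mod_lt _ (length_pos_iff.mpr (hu i))) := by
  simp [rowMatrix, getElem_rotate, Nat.add_comm (a i)]

theorem rowMatrix_eq_rowMatrix_iff (hlen : ∀ i, (u i).length ≤ mb) (a a' : Fin m → ℕ) :
    rowMatrix (mb := mb) u hu a = rowMatrix u hu a' ↔
      ∀ i, (u i).rotate (a i) = (u i).rotate (a' i) := by
  refine ⟨fun h i => ext_getElem (by simp) fun k hk _ => ?_, fun h => ?_⟩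
  · have hkL : k < (u i).length := by simpa using hk
    have := congrFun (congrFun h i) ⟨k, hkL.trans_le (hlen i)⟩
    simpa [rowMatrix_apply, Nat.mod_eq_of_lt hkL] using this
  · ext i j
    simp only [rowMatrix_apply, h i]

end rowMatrix

/-- Two `m × mb` matrices whose rows are periodic in the same primitive Lyndon
words `u i` (with `|u i| ≤ mb/4`) are equal iff their row alignments agree,
i.e. iff their 2D Lyndon word representatives together with the alignment
columns coincide: `A = A' ↔ ∀ i, a i ≡ a' i (mod |u i|)`. -/
theorem eq_iff_same_2D_lyndon_representative {α : Type*} [LinearOrder α]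
    {m mb : ℕ} (u : Fin m → List α) (hu : ∀ i, u i ≠ [])
    (hLyndon : ∀ i, IsLyndon (u i))
    (hquarter : ∀ i, 4 * (u i).length ≤ mb)
    (a a' : Fin m → ℕ) :
    rowMatrix (mb := mb) u hu a = rowMatrix (mb := mb) u hu a' ↔
      ∀ i, a i % (u i).length = a' i % (u i).length := by
  rw [rowMatrix_eq_rowMatrix_iff u hu (fun i => by linarith [hquarter i])]
  exact forall_congr' fun i => (hLyndon i).2.1.rotate_eq_rotate_iff
end

section
/- If S = u^j u' is periodic with primitive period u (j ≥ 2, u' a proper prefix of u), then |u| is the smallest period of S: for every p with 0 < p < |u|, there exists i such that S[i] ≠ S[i+p]. -/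
section

variable {α : Type*}

lemma listPow_succ (w : List α) (k : ℕ) : listPow w (k + 1) = w ++ listPow w k := by
  simp [listPow, List.replicate_succ]

lemma length_listPow (w : List α) (k : ℕ) : (listPow w k).length = k * w.length := by
  simp [listPow, List.sum_replicate]

lemma getElem?_listPow_append {u u' : List α} (hu' : u' <+: u) (k : ℕ) {i : ℕ}
    (hi : i < k * u.length + u'.length) : (listPow u k ++ u')[i]? = u[i % u.length]? := by
  induction k generalizing i with
  | zero =>
    obtain ⟨t, rfl⟩ := hu'
    simp only [zero_mul, zero_add] at hi
    rw [Nat.mod_eq_of_lt (by rw [List.length_append]; omega)]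
    simp [listPow, List.getElem?_append_left hi]
  | succ k ih =>
    rw [listPow_succ, List.append_assoc]
    by_cases hiu : i < u.length
    · rw [List.getElem?_append_left hiu, Nat.mod_eq_of_lt hiu]
    · rw [List.getElem?_append_right (by omega), ih (by rw [Nat.succ_mul] at hi; omega),
        ← Nat.mod_eq_sub_mod (by omega)]

def HasPeriod (S : List α) (p : ℕ) : Prop :=
  ∀ i, i + p < S.length → S[i]? = S[i + p]?

lemma hasPeriod_listPow_append {u u' : List α} (hu' : u' <+: u) (k : ℕ) :
    HasPeriod (listPow u k ++ u') u.length := by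
  intro i hi
  rw [List.length_append, length_listPow] at hi
  rw [getElem?_listPow_append hu' k (by omega), getElem?_listPow_append hu' k hi,
    Nat.add_mod_right]

namespace HasPeriod

variable {S : List α} {p q : ℕ}

lemma of_prefix {T : List α} (hT : T <+: S) (hp : HasPeriod S p) : HasPeriod T p := by
  obtain ⟨t, rfl⟩ := hT
  intro i hi
  have := hp i (by rw [List.length_append]; omega)
  rwa [List.getElem?_append_left (by omega), List.getElem?_append_left hi] at this

lemma sub (hp : HasPeriod S p) (hq : HasPeriod S q) (hpq : p ≤ q)
    (hlen : p + q ≤ S.length) : HasPeriod S (q - p) := by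
  intro i hi
  by_cases hip : p ≤ i
  · calc S[i]? = S[i - p]? := by simpa [Nat.sub_add_cancel hip] using (hp (i - p) (by omega)).symm
      _ = S[i - p + q]? := hq (i - p) (by omega)
      _ = S[i + (q - p)]? := by congr 1; omega
  · calc S[i]? = S[i + q]? := hq i (by omega)
      _ = S[i + (q - p)]? := by simpa [show i + (q - p) + p = i + q by omega] using
          (hp (i + (q - p)) (by omega)).symm

/-- The weak form of the Fine–Wilf theorem, proved by the subtractive Euclidean algorithm:
the bound `p + q ≤ |S|` survives replacing `(p, q)` by `(p, q - p)`. -/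
theorem gcd (hp : HasPeriod S p) (hq : HasPeriod S q) (hlen : p + q ≤ S.length) :
    HasPeriod S (Nat.gcd p q) := by
  induction h : p + q using Nat.strong_induction_on generalizing p q with
  | _ n ih =>
    subst h
    rcases Nat.eq_zero_or_pos p with rfl | hp0
    · simpa using hq
    rcases Nat.eq_zero_or_pos q with rfl | hq0
    · simpa using hp
    rcases le_total p q with hpq | hqp
    · rw [← Nat.gcd_sub_self_right hpq]
      exact ih _ (by omega) hp (hp.sub hq hpq hlen) (by omega) rfl
    · rw [← Nat.gcd_sub_self_left hqp]
      exact ih _ (by omega) (hq.sub hp hqp (by omega)) hq (by omega) rfl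

lemma getElem?_mod (hp : HasPeriod S p) {i : ℕ} (hi : i < S.length) : S[i]? = S[i % p]? := by
  induction i using Nat.strong_induction_on with
  | _ i ih =>
    rcases Nat.eq_zero_or_pos p with rfl | hp0
    · rw [Nat.mod_zero]
    by_cases hip : i < p
    · rw [Nat.mod_eq_of_lt hip]
    calc S[i]? = S[i - p]? := by
          simpa [Nat.sub_add_cancel (not_lt.1 hip)] using (hp (i - p) (by omega)).symm
      _ = S[(i - p) % p]? := ih _ (by omega) (by omega)
      _ = S[i % p]? := by rw [← Nat.mod_eq_sub_mod (not_lt.1 hip)]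

lemma eq_listPow (hp : HasPeriod S p) (hp0 : 0 < p) (hdvd : p ∣ S.length) :
    S = listPow (S.take p) (S.length / p) := by
  rcases Nat.eq_zero_or_pos S.length with hS | hS
  · simp [List.length_eq_zero_iff.1 hS, listPow]
  have hpS : p ≤ S.length := Nat.le_of_dvd hS hdvd
  have htake : (S.take p).length = p := List.length_take_of_le hpS
  have hlen : (S.length / p) * p = S.length := Nat.div_mul_cancel hdvd
  apply List.ext_getElem?
  intro i
  by_cases hi : i < S.length
  · have := getElem?_listPow_append (List.nil_prefix (l := S.take p)) (S.length / p)
      (i := i) (by simp [htake, hlen, hi])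
    rw [List.append_nil, htake] at this
    rw [this, List.getElem?_take_of_lt (Nat.mod_lt i hp0), hp.getElem?_mod hi]
  · rw [List.getElem?_eq_none (by omega),
      List.getElem?_eq_none (by rw [length_listPow, htake, hlen]; omega)]

end HasPeriod

lemma IsPrimitive.not_hasPeriod {u : List α} (hu : IsPrimitive u) {d : ℕ} (hd0 : 0 < d)
    (hdu : d < u.length) (hdvd : d ∣ u.length) : ¬ HasPeriod u d := by
  intro hd
  obtain ⟨m, hm⟩ := hdvd
  refine hu _ (u.length / d) ?_ (hd.eq_listPow hd0 ⟨m, hm⟩)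
  rw [hm, Nat.mul_div_cancel_left m hd0]
  by_contra!
  interval_cases m <;> omega

end

theorem primitive_period_is_smallest_general {α : Type*} (S u u' : List α) (j : ℕ)
    (hprim : IsPrimitive u) (hj : 2 ≤ j) (hu' : u' <+: u)
    (hS : S = listPow u j ++ u') :
    ∀ p, 0 < p → p < u.length →
      ∃ i, i + p < S.length ∧ S[i]? ≠ S[i + p]? := by
  intro p hp hpu
  by_contra! hper
  change HasPeriod S p at hper
  have hlen : p + u.length ≤ S.length := by
    have : 2 * u.length ≤ j * u.length := Nat.mul_le_mul_right _ hj
    rw [hS, List.length_append, length_listPow]; omega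
  have hprefix : u <+: S := by
    obtain ⟨k, rfl⟩ := Nat.exists_eq_add_of_le' (by omega : 1 ≤ j)
    rw [hS, listPow_succ, List.append_assoc]
    exact List.prefix_append _ _
  have hgcd : HasPeriod S (Nat.gcd p u.length) :=
    hper.gcd (hS ▸ hasPeriod_listPow_append hu' j) hlen
  exact hprim.not_hasPeriod (Nat.gcd_pos_of_pos_left _ hp)
    ((Nat.gcd_le_left _ hp).trans_lt hpu) (Nat.gcd_dvd_right _ _) (hgcd.of_prefix hprefix)

/-- If `S = u^j u'` is periodic with primitive period `u` (`j ≥ 2`, `u'` a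
proper prefix of `u`), then `|u|` is the smallest period of `S`: every
`p < |u|` fails to be a period. -/
theorem primitive_period_is_smallest {α : Type*} (S u u' : List α) (j : ℕ)
    (hprim : IsPrimitive u) (hj : 2 ≤ j) (hu' : u' <+: u) (hu'ne : u' ≠ u)
    (hS : S = listPow u j ++ u') :
    ∀ p, 0 < p → p < u.length →
      ∃ i, i + p < S.length ∧ S[i]? ≠ S[i + p]? :=
  primitive_period_is_smallest_general S u u' j hprim hj hu' hS
end
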